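/- arXiv:1912.00468 — 2 statements merged into one kernel-verified Lean document; each statement's English description precedes it below -/
import Mathlib

section
/- Let W be a symmetric n×n matrix with nonnegative entries and strictly positive diagonal entries, let p be a nonnegative vector in ℝ^n, c ≥ 0, let d be the diagonal of W and D = diag(d). For every x ∈ [0,1]ⁿ satisfying xᵀ(W−D)x + dᵀx ≤ c there exists x̄ ∈ [0,1]ⁿ with x̄ᵀ(W−D)x̄ + dᵀx̄ ≤ c, pᵀx̄ ≥ pᵀx, and at most one index i with x̄_i ∉ {0,1}. -/
/-- The quadratic form `xᵀ W x`. -/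
noncomputable def quadForm {ι : Type*} [Fintype ι] (W : Matrix ι ι ℝ) (x : ι → ℝ) : ℝ :=
  ∑ i, ∑ j, W i j * x i * x j

/-! The constraint function `g x = xᵀ M x + dᵀ x`, with `M = W - D` symmetric, nonnegative and
with zero diagonal, has gradient `A = 2 M x + d`, which is positive on the box. If `xᵢ` and `xⱼ`
are both fractional, move along `v = A j • eᵢ - A i • eⱼ` or along `-v`, whichever does not
decrease `pᵀ x`. Since `v ⬝ A = 0` and `vᵀ M v = -2 A i A j M i j ≤ 0`, `g` does not increase on
that line. Stopping when `xᵢ` reaches `1` or `xⱼ` reaches `0` removes a fractional coordinate, so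
a feasible `y` with `pᵀ y ≥ pᵀ x` and the fewest fractional coordinates has at most one. -/

open Matrix

variable {ι : Type*}

def fractionalIndices (x : ι → ℝ) : Set ι := {i | x i ≠ 0 ∧ x i ≠ 1}

theorem fractionalIndices_ssubset {x y : ι → ℝ} {i j : ι}
    (hi : i ∈ fractionalIndices x) (hj : j ∈ fractionalIndices x)
    (hyx : ∀ k, k ≠ i → k ≠ j → y k = x k)
    (hy : i ∉ fractionalIndices y ∨ j ∉ fractionalIndices y) :
    fractionalIndices y ⊂ fractionalIndices x := by
  have hsub : fractionalIndices y ⊆ fractionalIndices x := by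
    intro k hk
    by_cases hki : k = i
    · exact hki ▸ hi
    by_cases hkj : k = j
    · exact hkj ▸ hj
    show x k ≠ 0 ∧ x k ≠ 1
    rwa [← hyx k hki hkj]
  refine Set.ssubset_iff_subset_ne.2 ⟨hsub, fun heq => ?_⟩
  rcases hy with hy | hy
  · exact hy (heq ▸ hi)
  · exact hy (heq ▸ hj)

variable [Fintype ι]

section QuadForm

variable (M : Matrix ι ι ℝ)

theorem quadForm_eq_dotProduct_mulVec (x : ι → ℝ) : quadForm M x = x ⬝ᵥ M *ᵥ x := by
  simp only [quadForm, dotProduct, mulVec, Finset.mul_sum]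
  exact Finset.sum_congr rfl fun i _ => Finset.sum_congr rfl fun j _ => by ring

variable {M}

theorem quadForm_add_smul (hM : M.IsSymm) (x v : ι → ℝ) (t : ℝ) :
    quadForm M (x + t • v) = quadForm M x + 2 * t * (v ⬝ᵥ M *ᵥ x) + t ^ 2 * quadForm M v := by
  have hsymm : x ⬝ᵥ M *ᵥ v = v ⬝ᵥ M *ᵥ x := by
    rw [dotProduct_mulVec, ← mulVec_transpose, hM.eq, dotProduct_comm]
  simp only [quadForm_eq_dotProduct_mulVec, mulVec_add, mulVec_smul, add_dotProduct,
    dotProduct_add, smul_dotProduct, dotProduct_smul, hsymm, smul_eq_mul]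
  ring

theorem quadForm_single_sub_single [DecidableEq ι] (hM : M.IsSymm) (i j : ι) (a b : ℝ) :
    quadForm M (Pi.single i a - Pi.single j b) =
      a ^ 2 * M i i - 2 * a * b * M i j + b ^ 2 * M j j := by
  simp only [quadForm_eq_dotProduct_mulVec, mulVec_sub, mulVec_single, sub_dotProduct,
    dotProduct_sub, single_dotProduct, Pi.smul_apply, col_apply, op_smul_eq_mul, hM.apply i j]
  ring

end QuadForm

section Exchange

variable {M : Matrix ι ι ℝ} {d : ι → ℝ}

theorem quadForm_add_dotProduct_add_smul (hM : M.IsSymm) (x v : ι → ℝ) (t : ℝ) :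
    quadForm M (x + t • v) + d ⬝ᵥ (x + t • v) =
      quadForm M x + d ⬝ᵥ x + t * (v ⬝ᵥ ((2 : ℝ) • M *ᵥ x + d)) + t ^ 2 * quadForm M v := by
  rw [quadForm_add_smul hM, dotProduct_add, dotProduct_add, dotProduct_smul, dotProduct_smul,
    dotProduct_comm d v, smul_eq_mul, smul_eq_mul]
  ring

variable [DecidableEq ι]

theorem quadForm_add_dotProduct_exchange_le (hM : M.IsSymm) (x : ι → ℝ)
    {i j : ι} (hii : M i i ≤ 0) (hjj : M j j ≤ 0) (hij : 0 ≤ M i j)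
    (hAi : 0 ≤ ((2 : ℝ) • M *ᵥ x + d) i) (hAj : 0 ≤ ((2 : ℝ) • M *ᵥ x + d) j) (t : ℝ) :
    let A := (2 : ℝ) • M *ᵥ x + d
    quadForm M (x + t • (Pi.single i (A j) - Pi.single j (A i))) +
        d ⬝ᵥ (x + t • (Pi.single i (A j) - Pi.single j (A i))) ≤
      quadForm M x + d ⬝ᵥ x := by
  intro A
  rw [quadForm_add_dotProduct_add_smul hM, quadForm_single_sub_single hM, sub_dotProduct,
    single_dotProduct, single_dotProduct]
  nlinarith [mul_nonneg (sq_nonneg t) (mul_nonneg (mul_nonneg hAj hAi) hij),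
    mul_nonneg (sq_nonneg t) (mul_nonneg (sq_nonneg (A j)) (neg_nonneg.2 hii)),
    mul_nonneg (sq_nonneg t) (mul_nonneg (sq_nonneg (A i)) (neg_nonneg.2 hjj))]

theorem exists_exchange_step_of_le (hM : M.IsSymm) (hM0 : ∀ k m, 0 ≤ M k m)
    (hMdiag : ∀ k, M k k = 0) (hd : ∀ k, 0 < d k) (p x : ι → ℝ)
    (hx : ∀ k, x k ∈ Set.Icc (0 : ℝ) 1)
    {i j : ι} (hi : i ∈ fractionalIndices x) (hj : j ∈ fractionalIndices x) (hij : i ≠ j)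
    (hp : p j * ((2 : ℝ) • M *ᵥ x + d) i ≤ p i * ((2 : ℝ) • M *ᵥ x + d) j) :
    ∃ y : ι → ℝ, (∀ k, y k ∈ Set.Icc (0 : ℝ) 1) ∧
      quadForm M y + d ⬝ᵥ y ≤ quadForm M x + d ⬝ᵥ x ∧ p ⬝ᵥ x ≤ p ⬝ᵥ y ∧
      fractionalIndices y ⊂ fractionalIndices x := by
  set A := (2 : ℝ) • M *ᵥ x + d
  have hA : ∀ k, 0 < A k := fun k => by
    have : 0 ≤ (M *ᵥ x) k := Finset.sum_nonneg fun m _ => mul_nonneg (hM0 k m) (hx m).1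
    simp only [A, Pi.add_apply, Pi.smul_apply, smul_eq_mul]
    linarith [hd k]
  set t := min ((1 - x i) / A j) (x j / A i) with ht_def
  set y := x + t • (Pi.single i (A j) - Pi.single j (A i))
  have hy_off : ∀ k, k ≠ i → k ≠ j → y k = x k := fun k hki hkj => by
    simp [y, Pi.single_eq_of_ne hki, Pi.single_eq_of_ne hkj]
  have hyi : y i = x i + t * A j := by simp [y, hij]
  have hyj : y j = x j - t * A i := by simp [y, hij.symm, sub_eq_add_neg]
  have ht0 : 0 ≤ t := le_min (div_nonneg (by linarith [(hx i).2]) (hA j).le)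
    (div_nonneg (hx j).1 (hA i).le)
  have hti : t * A j ≤ 1 - x i := (le_div_iff₀ (hA j)).1 (min_le_left _ _)
  have htj : t * A i ≤ x j := (le_div_iff₀ (hA i)).1 (min_le_right _ _)
  refine ⟨y, fun k => ?_, ?_, ?_, fractionalIndices_ssubset hi hj hy_off ?_⟩
  · by_cases hki : k = i
    · subst hki
      rw [hyi]
      constructor <;> nlinarith [(hx k).1, hA j]
    by_cases hkj : k = j
    · subst hkj
      rw [hyj]
      constructor <;> nlinarith [(hx k).2, hA i]
    rw [hy_off k hki hkj]
    exact hx k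
  · exact quadForm_add_dotProduct_exchange_le hM x (hMdiag i).le (hMdiag j).le (hM0 i j)
      (hA i).le (hA j).le t
  · have : p ⬝ᵥ y = p ⬝ᵥ x + t * (p i * A j - p j * A i) := by
      simp only [y, dotProduct_add, dotProduct_smul, dotProduct_sub, dotProduct_single,
        smul_eq_mul]
    rw [this]
    linarith [mul_nonneg ht0 (sub_nonneg.2 hp)]
  · rcases min_choice ((1 - x i) / A j) (x j / A i) with h | h
    · left
      refine fun hyfrac => hyfrac.2 ?_
      rw [hyi, ht_def, h, div_mul_cancel₀ _ (hA j).ne']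
      ring
    · right
      refine fun hyfrac => hyfrac.1 ?_
      rw [hyj, ht_def, h, div_mul_cancel₀ _ (hA i).ne']
      ring

theorem exists_exchange_step (hM : M.IsSymm) (hM0 : ∀ k m, 0 ≤ M k m)
    (hMdiag : ∀ k, M k k = 0) (hd : ∀ k, 0 < d k) (p x : ι → ℝ)
    (hx : ∀ k, x k ∈ Set.Icc (0 : ℝ) 1)
    {i j : ι} (hi : i ∈ fractionalIndices x) (hj : j ∈ fractionalIndices x) (hij : i ≠ j) :
    ∃ y : ι → ℝ, (∀ k, y k ∈ Set.Icc (0 : ℝ) 1) ∧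
      quadForm M y + d ⬝ᵥ y ≤ quadForm M x + d ⬝ᵥ x ∧ p ⬝ᵥ x ≤ p ⬝ᵥ y ∧
      fractionalIndices y ⊂ fractionalIndices x := by
  rcases le_total (p j * ((2 : ℝ) • M *ᵥ x + d) i) (p i * ((2 : ℝ) • M *ᵥ x + d) j) with hp | hp
  · exact exists_exchange_step_of_le hM hM0 hMdiag hd p x hx hi hj hij hp
  · exact exists_exchange_step_of_le hM hM0 hMdiag hd p x hx hj hi hij.symm hp

end Exchange

theorem stmt_1_general {n : ℕ} (W : Matrix (Fin n) (Fin n) ℝ) (hsym : W.IsSymm)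
    (hW : ∀ i j, 0 ≤ W i j) (hdiag : ∀ i, 0 < W i i)
    (p : Fin n → ℝ) (c : ℝ)
    (x : Fin n → ℝ) (hx : ∀ i, x i ∈ Set.Icc (0:ℝ) 1)
    (hfeas : quadForm (W - Matrix.diagonal (fun i => W i i)) x + (∑ i, W i i * x i) ≤ c) :
    ∃ y : Fin n → ℝ, (∀ i, y i ∈ Set.Icc (0:ℝ) 1) ∧
      quadForm (W - Matrix.diagonal (fun i => W i i)) y + (∑ i, W i i * y i) ≤ c ∧
      (∑ i, p i * x i) ≤ (∑ i, p i * y i) ∧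
      {i : Fin n | y i ≠ 0 ∧ y i ≠ 1}.Subsingleton := by
  set M := W - Matrix.diagonal (fun i => W i i)
  have hM : M.IsSymm := hsym.sub (isSymm_diagonal _)
  have hMdiag : ∀ k, M k k = 0 := fun k => by simp [M]
  have hM0 : ∀ k m, 0 ≤ M k m := fun k m => by
    rcases eq_or_ne k m with rfl | hkm
    · exact (hMdiag k).ge
    · simpa [M, diagonal_apply_ne _ hkm] using hW k m
  set S := {y : Fin n → ℝ | (∀ i, y i ∈ Set.Icc (0:ℝ) 1) ∧
    quadForm M y + (fun i => W i i) ⬝ᵥ y ≤ c ∧ p ⬝ᵥ x ≤ p ⬝ᵥ y}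
  obtain ⟨y, ⟨hy, hyfeas, hyp⟩, hmin⟩ :=
    (measure fun y => (fractionalIndices y).ncard).wf.has_min S ⟨x, hx, hfeas, le_rfl⟩
  refine ⟨y, hy, hyfeas, hyp, fun i hi j hj => by_contra fun hij => ?_⟩
  obtain ⟨z, hz, hzfeas, hzp, hzy⟩ := exists_exchange_step hM hM0 hMdiag hdiag p y hy hi hj hij
  exact hmin z ⟨hz, hzfeas.trans hyfeas, hyp.trans hzp⟩ (Set.ncard_lt_ncard hzy)

theorem stmt_1 {n : ℕ} (W : Matrix (Fin n) (Fin n) ℝ) (hsym : W.IsSymm)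
    (hW : ∀ i j, 0 ≤ W i j) (hdiag : ∀ i, 0 < W i i)
    (p : Fin n → ℝ) (hp : ∀ i, 0 ≤ p i) (c : ℝ) (hc : 0 ≤ c)
    (x : Fin n → ℝ) (hx : ∀ i, x i ∈ Set.Icc (0:ℝ) 1)
    (hfeas : quadForm (W - Matrix.diagonal (fun i => W i i)) x + (∑ i, W i i * x i) ≤ c) :
    ∃ y : Fin n → ℝ, (∀ i, y i ∈ Set.Icc (0:ℝ) 1) ∧
      quadForm (W - Matrix.diagonal (fun i => W i i)) y + (∑ i, W i i * y i) ≤ c ∧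
      (∑ i, p i * x i) ≤ (∑ i, p i * y i) ∧
      {i : Fin n | y i ≠ 0 ∧ y i ≠ 1}.Subsingleton :=
  stmt_1_general W hsym hW hdiag p c x hx hfeas
end

section
/- Let W be a symmetric n×n matrix with nonnegative entries and diagonal d, c ≥ 0, and let y ∈ [0,1]ⁿ satisfy yᵀWy ≤ c and dᵀy ≤ c. Let α ∈ (0,1) and let X = (X₁,…,X_n) be stochastically independent {0,1}-valued random variables with ℙ[X_i = 1] = α·y_i. Then 𝔼[ XᵀWX ] ≤ (α² + α)·c. -/
/-!
Writing `p = α • y` for the vector of means, independence and `X_i² = X_i` give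
`𝔼[X_i X_j] = p_i p_j + [i = j] p_i (1 - p_i)`, so `𝔼[XᵀWX] = α² yᵀWy + ∑ᵢ W_ii p_i (1 - p_i)`.
The first term is at most `α² c`, and since `W_ii ≥ 0` and `p_i (1 - p_i) ≤ p_i = α y_i`
the second is at most `α dᵀy ≤ α c`.
-/

open MeasureTheory ProbabilityTheory

open Finset

section QuadForm

variable {ι : Type*} [Fintype ι]

lemma quadForm_smul (W : Matrix ι ι ℝ) (a : ℝ) (x : ι → ℝ) :
    quadForm W (a • x) = a ^ 2 * quadForm W x := by
  simp only [quadForm, Pi.smul_apply, smul_eq_mul, mul_sum]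
  exact sum_congr rfl fun i _ => sum_congr rfl fun j _ => by ring

lemma sum_sum_mul_add_diagonal [DecidableEq ι] (W : Matrix ι ι ℝ) (x b : ι → ℝ) :
    ∑ i, ∑ j, W i j * (x i * x j + if i = j then b i else 0) =
      quadForm W x + ∑ i, W i i * b i := by
  simp only [mul_add, sum_add_distrib, mul_ite, mul_zero, sum_ite_eq, mem_univ, if_true,
    quadForm, mul_assoc]

end QuadForm

section ZeroOne

variable {Ω : Type*}

lemma eq_indicator_of_forall_eq_zero_or_one {f : Ω → ℝ} (h01 : ∀ ω, f ω = 0 ∨ f ω = 1) :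
    f = {ω | f ω = 1}.indicator 1 := by
  funext ω
  rcases h01 ω with h | h <;> simp [h]

lemma forall_mul_eq_zero_or_one {ι : Type*} {X : ι → Ω → ℝ}
    (hbin : ∀ i ω, X i ω = 0 ∨ X i ω = 1) (i j : ι) (ω : Ω) :
    X i ω * X j ω = 0 ∨ X i ω * X j ω = 1 := by
  rcases hbin i ω with h | h <;> rcases hbin j ω with h' | h' <;> simp [h, h']

variable [MeasurableSpace Ω] {μ : Measure Ω}

lemma integrable_of_forall_eq_zero_or_one [IsFiniteMeasure μ] {f : Ω → ℝ} (hf : Measurable f)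
    (h01 : ∀ ω, f ω = 0 ∨ f ω = 1) : Integrable f μ := by
  rw [eq_indicator_of_forall_eq_zero_or_one h01]
  exact (integrable_const 1).indicator (hf (measurableSet_singleton 1))

lemma integral_of_forall_eq_zero_or_one {f : Ω → ℝ} (hf : Measurable f)
    (h01 : ∀ ω, f ω = 0 ∨ f ω = 1) : ∫ ω, f ω ∂μ = μ.real {ω | f ω = 1} := by
  nth_rw 1 [eq_indicator_of_forall_eq_zero_or_one h01]
  exact integral_indicator_one (hf (measurableSet_singleton 1))

end ZeroOne

section Bernoulli

variable {Ω ι : Type*} [MeasurableSpace Ω] {μ : Measure Ω} {X : ι → Ω → ℝ}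

lemma integral_mul_of_iIndepFun_zero_or_one [DecidableEq ι] (hmeas : ∀ i, Measurable (X i))
    (hindep : iIndepFun X μ) (hbin : ∀ i ω, X i ω = 0 ∨ X i ω = 1) (i j : ι) :
    ∫ ω, X i ω * X j ω ∂μ = (∫ ω, X i ω ∂μ) * (∫ ω, X j ω ∂μ) +
      if i = j then (∫ ω, X i ω ∂μ) * (1 - ∫ ω, X i ω ∂μ) else 0 := by
  by_cases hij : i = j
  · subst hij
    have hsq : (fun ω => X i ω * X i ω) = X i := by
      funext ω
      rcases hbin i ω with h | h <;> simp [h]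
    rw [hsq, if_pos rfl]
    ring
  · rw [if_neg hij, add_zero]
    exact (hindep.indepFun hij).integral_fun_mul_eq_mul_integral
      (hmeas i).aestronglyMeasurable (hmeas j).aestronglyMeasurable

lemma integral_quadForm_of_iIndepFun_zero_or_one [Fintype ι] [IsFiniteMeasure μ]
    (W : Matrix ι ι ℝ) (hmeas : ∀ i, Measurable (X i)) (hindep : iIndepFun X μ)
    (hbin : ∀ i ω, X i ω = 0 ∨ X i ω = 1) :
    ∫ ω, quadForm W (fun i => X i ω) ∂μ =
      quadForm W (fun i => ∫ ω, X i ω ∂μ) +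
        ∑ i, W i i * ((∫ ω, X i ω ∂μ) * (1 - ∫ ω, X i ω ∂μ)) := by
  classical
  have hint : ∀ i j, Integrable (fun ω => X i ω * X j ω) μ := fun i j =>
    integrable_of_forall_eq_zero_or_one ((hmeas i).mul (hmeas j))
      (forall_mul_eq_zero_or_one hbin i j)
  have hlin : ∫ ω, quadForm W (fun i => X i ω) ∂μ =
      ∑ i, ∑ j, W i j * ∫ ω, X i ω * X j ω ∂μ := by
    simp only [quadForm, mul_assoc]
    rw [integral_finsetSum _ fun i _ =>
      integrable_finsetSum _ fun j _ => (hint i j).const_mul (W i j)]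
    refine sum_congr rfl fun i _ => ?_
    rw [integral_finsetSum _ fun j _ => (hint i j).const_mul (W i j)]
    exact sum_congr rfl fun j _ => integral_const_mul _ _
  rw [hlin, ← sum_sum_mul_add_diagonal]
  simp only [integral_mul_of_iIndepFun_zero_or_one hmeas hindep hbin]

end Bernoulli

theorem stmt_16_general {n : ℕ} (W : Matrix (Fin n) (Fin n) ℝ)
    (hW : ∀ i j, 0 ≤ W i j) (c : ℝ)
    (y : Fin n → ℝ) (hy : ∀ i, y i ∈ Set.Icc (0:ℝ) 1)
    (h1 : quadForm W y ≤ c) (h2 : (∑ i, W i i * y i) ≤ c)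
    (α : ℝ) (hα : α ∈ Set.Ioo (0:ℝ) 1)
    {Ω : Type*} [MeasurableSpace Ω] (μ : Measure Ω) [IsProbabilityMeasure μ]
    (X : Fin n → Ω → ℝ) (hmeas : ∀ i, Measurable (X i))
    (hindep : iIndepFun X μ)
    (hbin : ∀ i ω, X i ω = 0 ∨ X i ω = 1)
    (hdist : ∀ i, μ {ω | X i ω = 1} = ENNReal.ofReal (α * y i)) :
    ∫ ω, quadForm W (fun i => X i ω) ∂μ ≤ (α ^ 2 + α) * c := by
  have hmean : ∀ i, ∫ ω, X i ω ∂μ = α * y i := fun i => by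
    rw [integral_of_forall_eq_zero_or_one (hmeas i) (hbin i), measureReal_def, hdist i,
      ENNReal.toReal_ofReal (mul_nonneg hα.1.le (hy i).1)]
  have hdiag : ∑ i, W i i * (α * y i * (1 - α * y i)) ≤ α * ∑ i, W i i * y i := by
    rw [mul_sum]
    exact sum_le_sum fun i _ => by nlinarith [mul_nonneg (hW i i) (sq_nonneg (α * y i))]
  rw [integral_quadForm_of_iIndepFun_zero_or_one W hmeas hindep hbin]
  simp only [hmean]
  rw [show (fun i => α * y i) = α • y from rfl, quadForm_smul]
  linarith [mul_le_mul_of_nonneg_left h1 (sq_nonneg α), mul_le_mul_of_nonneg_left h2 hα.1.le]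

theorem stmt_16 {n : ℕ} (W : Matrix (Fin n) (Fin n) ℝ) (hsym : W.IsSymm)
    (hW : ∀ i j, 0 ≤ W i j) (c : ℝ)
    (y : Fin n → ℝ) (hy : ∀ i, y i ∈ Set.Icc (0:ℝ) 1)
    (h1 : quadForm W y ≤ c) (h2 : (∑ i, W i i * y i) ≤ c)
    (α : ℝ) (hα : α ∈ Set.Ioo (0:ℝ) 1)
    {Ω : Type*} [MeasurableSpace Ω] (μ : Measure Ω) [IsProbabilityMeasure μ]
    (X : Fin n → Ω → ℝ) (hmeas : ∀ i, Measurable (X i))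
    (hindep : iIndepFun X μ)
    (hbin : ∀ i ω, X i ω = 0 ∨ X i ω = 1)
    (hdist : ∀ i, μ {ω | X i ω = 1} = ENNReal.ofReal (α * y i)) :
    ∫ ω, quadForm W (fun i => X i ω) ∂μ ≤ (α ^ 2 + α) * c :=
  stmt_16_general W hW c y hy h1 h2 α hα μ X hmeas hindep hbin hdist
end
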